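/- arXiv:1711.08483 — 4 statements merged into one kernel-verified Lean document; each statement's English description precedes it below -/
import Mathlib

section
/- If the elementary abelian group C₂ × C₂ × C₂ admits a ramification structure (T₁, T₂) of size (r₁, r₂), then r₁ and r₂ are not both odd. -/
/-!
Write `C₂³` additively as `(ZMod 2)³`. The distinct entries of a spherical system span this
space, so if there are at most three of them they form a basis; then `T.prod = 1` forces every
entry to occur an even number of times, and the length is even. Hence a spherical system of odd
length has at least four distinct entries. The entries of `T₁` and `T₂` are nontrivial, and no
entry is shared since each lies in its own `Σ`; two such systems would need `4 + 4 + 1 > 8`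
elements.
-/

/-- A spherical system of generators: a tuple (list) of nontrivial elements
generating `G` whose product is `1`. -/
def IsSpherical {G : Type*} [Group G] (T : List G) : Prop :=
  (∀ g ∈ T, g ≠ 1) ∧ Subgroup.closure {g : G | g ∈ T} = ⊤ ∧ T.prod = 1

/-- `Σ(T)`: the union of all conjugates of the cyclic subgroups generated by
the entries of `T`. -/
def SigmaSet {G : Type*} [Group G] (T : List G) : Set G :=
  {x : G | ∃ t ∈ T, ∃ c : G, ∃ k : ℤ, x = c * t ^ k * c⁻¹}

/-- An (unmixed) ramification structure: a pair of spherical systems of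
generators which are disjoint, i.e. `Σ(T₁) ∩ Σ(T₂) = {1}`. -/
def IsRamificationStructure {G : Type*} [Group G] (T₁ T₂ : List G) : Prop :=
  IsSpherical T₁ ∧ IsSpherical T₂ ∧ SigmaSet T₁ ∩ SigmaSet T₂ = {1}

open Module Submodule Multiplicative

section Group

variable {G : Type*} [Group G] {T T₁ T₂ : List G}

theorem mem_sigmaSet_of_mem {t : G} (ht : t ∈ T) : t ∈ SigmaSet T :=
  ⟨t, ht, 1, 1, by simp⟩

theorem IsRamificationStructure.disjoint_toFinset [DecidableEq G]
    (h : IsRamificationStructure T₁ T₂) : Disjoint T₁.toFinset T₂.toFinset := by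
  rw [Finset.disjoint_left]
  intro t ht₁ ht₂
  rw [List.mem_toFinset] at ht₁ ht₂
  have hmem : t ∈ SigmaSet T₁ ∩ SigmaSet T₂ := ⟨mem_sigmaSet_of_mem ht₁, mem_sigmaSet_of_mem ht₂⟩
  rw [h.2.2] at hmem
  exact h.1.1 t ht₁ hmem

theorem IsRamificationStructure.card_toFinset_add_card_toFinset_lt [Fintype G] [DecidableEq G]
    (h : IsRamificationStructure T₁ T₂) :
    T₁.toFinset.card + T₂.toFinset.card < Fintype.card G := by
  have hone : (1 : G) ∉ T₁.toFinset ∪ T₂.toFinset := by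
    simp only [Finset.mem_union, List.mem_toFinset, not_or]
    exact ⟨fun h₁ => h.1.1 1 h₁ rfl, fun h₂ => h.2.1.1 1 h₂ rfl⟩
  calc T₁.toFinset.card + T₂.toFinset.card < (insert 1 (T₁.toFinset ∪ T₂.toFinset)).card := by
        rw [Finset.card_insert_of_notMem hone, Finset.card_union_of_disjoint h.disjoint_toFinset]
        exact Nat.lt_succ_self _
    _ ≤ Fintype.card G := Finset.card_le_univ _

end Group

section ElementaryAbelian

variable {V : Type*} [AddCommGroup V]

theorem span_toAdd_eq_top_of_closure_eq_top (R : Type*) [Ring R] [Module R V]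
    {S : Set (Multiplicative V)} (hS : Subgroup.closure S = ⊤) : span R (toAdd '' S) = ⊤ := by
  have hle : Subgroup.closure S ≤ AddSubgroup.toSubgroup (span R (toAdd '' S)).toAddSubgroup :=
    (Subgroup.closure_le _).mpr fun g hg => show toAdd g ∈ span R _ from subset_span ⟨g, hg, rfl⟩
  rw [hS, top_le_iff] at hle
  exact eq_top_iff.mpr fun x _ => (mem_toSubgroup _ (ofAdd x)).mp (hle ▸ Subgroup.mem_top _)

variable [Module (ZMod 2) V] [DecidableEq V]

theorem even_length_of_linearIndepOn_of_prod_eq_one {T : List (Multiplicative V)}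
    (hT : LinearIndepOn (ZMod 2) toAdd (T.toFinset : Set (Multiplicative V)))
    (hprod : T.prod = 1) : Even T.length := by
  have hsum : ∑ m ∈ T.toFinset, ((T.count m : ℕ) : ZMod 2) • toAdd m = 0 := by
    simp_rw [Nat.cast_smul_eq_nsmul, ← toAdd_pow, ← toAdd_prod, ← Finset.prod_list_count, hprod,
      toAdd_one]
  rw [← List.sum_toFinset_count_eq_length]
  exact Finset.even_sum _ fun m hm =>
    ZMod.natCast_eq_zero_iff_even.mp (linearIndepOn_finset_iff.mp hT _ hsum m hm)

theorem IsSpherical.finrank_lt_card_toFinset {T : List (Multiplicative V)} (hT : IsSpherical T)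
    (hodd : Odd T.length) : finrank (ZMod 2) V < T.toFinset.card := by
  by_contra! hcard
  have hspan :
      ⊤ ≤ span (ZMod 2) (Set.range fun t : T.toFinset => toAdd (t : Multiplicative V)) := by
    rw [Set.range_comp' toAdd, Subtype.range_coe, List.coe_toFinset]
    exact (span_toAdd_eq_top_of_closure_eq_top _ hT.2.1).ge
  have hindep : LinearIndepOn (ZMod 2) toAdd (T.toFinset : Set (Multiplicative V)) :=
    linearIndependent_of_top_le_span_of_card_le_finrank hspan
      (by simpa only [Finset.coe_sort_coe, Fintype.card_coe] using hcard)
  exact Nat.not_even_iff_odd.mpr hodd (even_length_of_linearIndepOn_of_prod_eq_one hindep hT.2.2)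

end ElementaryAbelian

theorem stmt_5 (T₁ T₂ : List (Multiplicative (Fin 3 → ZMod 2)))
    (h : IsRamificationStructure T₁ T₂) :
    ¬ (Odd T₁.length ∧ Odd T₂.length) := by
  rintro ⟨hodd₁, hodd₂⟩
  have hrank : finrank (ZMod 2) (Fin 3 → ZMod 2) = 3 := by simp
  have hcard : Fintype.card (Multiplicative (Fin 3 → ZMod 2)) = 8 := rfl
  have h₁ := h.1.finrank_lt_card_toFinset hodd₁
  have h₂ := h.2.1.finrank_lt_card_toFinset hodd₂
  have h₁₂ := h.card_toFinset_add_card_toFinset_lt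
  omega
end

section
/- The group C₃ × C₃ admits a ramification structure of size (4,4); explicitly, with generators x₁, x₂, the tuples T₁ = (x₁, x₁⁻¹, x₂, x₂⁻¹) and T₂ = (x₁x₂, (x₁x₂)⁻¹, x₁x₂², (x₁x₂²)⁻¹) form a ramification structure. -/
/-!
In an abelian group conjugation is trivial, so `Σ([a, a⁻¹, b, b⁻¹])` is just
`⟨a⟩ ∪ ⟨b⟩`, and the tuple is spherical as soon as `a, b ≠ 1` generate. In
`C₃ × C₃ ≅ 𝔽₃²` the four cyclic subgroups `⟨x₁⟩, ⟨x₂⟩, ⟨x₁x₂⟩, ⟨x₁x₂²⟩` are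
four distinct lines through the origin, hence meet pairwise trivially; since
every element has order dividing `3`, this reduces to a finite check.
-/

open Subgroup

section Group

variable {G : Type*} [Group G]

lemma closure_setOf_mem_inv_pairs (a b : G) :
    closure {g : G | g ∈ [a, a⁻¹, b, b⁻¹]} = closure {a, b} := by
  apply le_antisymm
  · rw [closure_le]
    have ha : a ∈ closure {a, b} := subset_closure (by simp)
    have hb : b ∈ closure {a, b} := subset_closure (by simp)
    rintro g hg
    simp only [List.mem_cons, List.not_mem_nil, or_false, Set.mem_ofPred_eq] at hg
    rcases hg with rfl | rfl | rfl | rfl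
    exacts [ha, inv_mem ha, hb, inv_mem hb]
  · exact closure_mono (by simp [Set.insert_subset_iff])

lemma closure_pair_eq_top_of_forall_eq_pow_mul_pow {a b : G}
    (h : ∀ g : G, ∃ m n : ℕ, g = a ^ m * b ^ n) : closure {a, b} = ⊤ := by
  refine eq_top_iff.2 fun g _ => ?_
  obtain ⟨m, n, rfl⟩ := h g
  exact mul_mem (pow_mem (subset_closure (by simp)) m) (pow_mem (subset_closure (by simp)) n)

lemma isSpherical_inv_pairs {a b : G} (ha : a ≠ 1) (hb : b ≠ 1)
    (hab : closure {a, b} = ⊤) : IsSpherical [a, a⁻¹, b, b⁻¹] := by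
  refine ⟨?_, by rw [closure_setOf_mem_inv_pairs, hab], by simp⟩
  simp [ha, hb]

lemma mem_zpowers_iff_exists_lt_of_pow_eq_one {t x : G} {n : ℕ} (hn : 0 < n)
    (ht : t ^ n = 1) : x ∈ zpowers t ↔ ∃ m < n, t ^ m = x := by
  rw [mem_zpowers_iff]
  constructor
  · rintro ⟨k, rfl⟩
    have h₀ : 0 ≤ k % n := Int.emod_nonneg k (by omega)
    have h₁ : k % n < n := Int.emod_lt_of_pos k (by omega)
    refine ⟨(k % n).toNat, by omega, ?_⟩
    rw [← zpow_natCast, Int.toNat_of_nonneg h₀, ← zpow_eq_zpow_emod' k ht]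
  · rintro ⟨m, -, rfl⟩
    exact ⟨m, zpow_natCast t m⟩

end Group

section CommGroup

variable {G : Type*} [CommGroup G]

lemma sigmaSet_eq_biUnion_zpowers (T : List G) :
    SigmaSet T = ⋃ t ∈ T, (zpowers t : Set G) := by
  ext x
  simp only [SigmaSet, Set.mem_ofPred_eq, Set.mem_iUnion, SetLike.mem_coe, mem_zpowers_iff,
    mul_inv_cancel_comm, exists_prop]
  exact exists_congr fun t => and_congr_right fun _ =>
    ⟨fun ⟨_, k, hk⟩ => ⟨k, hk.symm⟩, fun ⟨k, hk⟩ => ⟨1, k, hk.symm⟩⟩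

lemma sigmaSet_inv_pairs (a b : G) :
    SigmaSet [a, a⁻¹, b, b⁻¹] = (zpowers a : Set G) ∪ zpowers b := by
  simp [sigmaSet_eq_biUnion_zpowers, zpowers_inv]

lemma isRamificationStructure_inv_pairs {a b c d : G}
    (h₁ : IsSpherical [a, a⁻¹, b, b⁻¹]) (h₂ : IsSpherical [c, c⁻¹, d, d⁻¹])
    (hac : Disjoint (zpowers a) (zpowers c)) (had : Disjoint (zpowers a) (zpowers d))
    (hbc : Disjoint (zpowers b) (zpowers c)) (hbd : Disjoint (zpowers b) (zpowers d)) :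
    IsRamificationStructure [a, a⁻¹, b, b⁻¹] [c, c⁻¹, d, d⁻¹] := by
  refine ⟨h₁, h₂, ?_⟩
  rw [sigmaSet_inv_pairs, sigmaSet_inv_pairs]
  refine Set.Subset.antisymm ?_ (by simp [one_mem])
  rintro x ⟨hx | hx, hx' | hx'⟩
  exacts [disjoint_def.1 hac hx hx', disjoint_def.1 had hx hx',
    disjoint_def.1 hbc hx hx', disjoint_def.1 hbd hx hx']

end CommGroup

lemma mem_zpowers_iff_exists_lt_three (t x : Multiplicative (ZMod 3) × Multiplicative (ZMod 3)) :
    x ∈ zpowers t ↔ ∃ m < 3, t ^ m = x :=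
  mem_zpowers_iff_exists_lt_of_pow_eq_one three_pos (by revert t; decide)

theorem stmt_7 :
    let x₁ : Multiplicative (ZMod 3) × Multiplicative (ZMod 3) :=
      (Multiplicative.ofAdd 1, 1)
    let x₂ : Multiplicative (ZMod 3) × Multiplicative (ZMod 3) :=
      (1, Multiplicative.ofAdd 1)
    IsRamificationStructure [x₁, x₁⁻¹, x₂, x₂⁻¹]
      [x₁ * x₂, (x₁ * x₂)⁻¹, x₁ * x₂ ^ 2, (x₁ * x₂ ^ 2)⁻¹] := by
  intro x₁ x₂
  have hdisj : ∀ a ∈ [x₁, x₂], ∀ c ∈ [x₁ * x₂, x₁ * x₂ ^ 2],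
      Disjoint (zpowers a) (zpowers c) := by
    simp only [disjoint_def, mem_zpowers_iff_exists_lt_three]
    decide
  have hgen : ∀ a b : Multiplicative (ZMod 3) × Multiplicative (ZMod 3),
      (∀ g, ∃ m < 3, ∃ n < 3, g = a ^ m * b ^ n) → Subgroup.closure {a, b} = ⊤ :=
    fun a b h => closure_pair_eq_top_of_forall_eq_pow_mul_pow fun g =>
      let ⟨m, _, n, _, hg⟩ := h g; ⟨m, n, hg⟩
  exact isRamificationStructure_inv_pairs
    (isSpherical_inv_pairs (by decide) (by decide) (hgen _ _ (by decide)))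
    (isSpherical_inv_pairs (by decide) (by decide) (hgen _ _ (by decide)))
    (hdisj _ (by simp) _ (by simp)) (hdisj _ (by simp) _ (by simp))
    (hdisj _ (by simp) _ (by simp)) (hdisj _ (by simp) _ (by simp))
end

section
/- If G is an elementary abelian p-group of rank d admitting a ramification structure of size (r₁, r₂) with r₁, r₂ ≥ d+2, and G* is an elementary abelian p-group of rank d+1, then G* admits a ramification structure of size (r₁, r₂). -/
/-!
View `G` as an `𝔽_p`-vector space `V` and `G*` as `V × 𝔽_p`. A spherical system `(tᵢ)` of `V`
with `r ≥ dim V + 2` entries is lifted to `(tᵢ, aᵢ)` with `∑ aᵢ = 0`. The relations `k` with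
`∑ kᵢ tᵢ = 0` form a space of dimension `≥ 2`, so some relation is not constant, and `a` can be
chosen with `∑ kᵢ aᵢ ≠ 0`; the lift then contains the vertical line `0 × 𝔽_p` and maps onto `V`,
so it generates `V × 𝔽_p`. Disjointness is inherited from `V`: the projection is injective on the
cyclic subgroup generated by each entry, since every nontrivial element has order `p`.
-/

open Multiplicative Module

section Group

variable {G H : Type*} [Group G] [Group H]

lemma one_mem_sigmaSet {T : List G} {t : G} (ht : t ∈ T) : (1 : G) ∈ SigmaSet T :=
  ⟨t, ht, 1, 0, by simp⟩

lemma map_mem_sigmaSet_map (φ : G →* H) {T : List G} {x : G} (hx : x ∈ SigmaSet T) :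
    φ x ∈ SigmaSet (T.map φ) := by
  obtain ⟨t, ht, c, k, rfl⟩ := hx
  exact ⟨φ t, List.mem_map_of_mem ht, φ c, k, by simp⟩

lemma sigmaSet_inter_eq_one_of_map (φ : G →* H) {T₁ T₂ : List G}
    (hord : ∀ t ∈ T₁, orderOf t ∣ orderOf (φ t))
    (h : SigmaSet (T₁.map φ) ∩ SigmaSet (T₂.map φ) = {1}) :
    SigmaSet T₁ ∩ SigmaSet T₂ = {1} := by
  ext x
  constructor
  · rintro ⟨hx₁, hx₂⟩
    have hφx : φ x = 1 := h.subset ⟨map_mem_sigmaSet_map φ hx₁, map_mem_sigmaSet_map φ hx₂⟩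
    obtain ⟨t, ht, c, k, rfl⟩ := hx₁
    have htk : φ t ^ k = 1 := by simpa using hφx
    have : t ^ k = 1 := orderOf_dvd_iff_zpow_eq_one.mp
      ((Int.natCast_dvd_natCast.mpr (hord t ht)).trans (orderOf_dvd_iff_zpow_eq_one.mpr htk))
    simp [this]
  · rintro rfl
    obtain ⟨⟨t₁, ht₁, -⟩, ⟨t₂, ht₂, -⟩⟩ := h.superset rfl
    obtain ⟨s₁, hs₁, -⟩ := List.mem_map.mp ht₁
    obtain ⟨s₂, hs₂, -⟩ := List.mem_map.mp ht₂
    exact ⟨one_mem_sigmaSet hs₁, one_mem_sigmaSet hs₂⟩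

lemma IsSpherical.map_mulEquiv (e : G ≃* H) {T : List G} (hT : IsSpherical T) :
    IsSpherical (T.map e) := by
  obtain ⟨hne, hgen, hprod⟩ := hT
  refine ⟨?_, ?_, ?_⟩
  · simp only [List.mem_map, forall_exists_index, and_imp]
    rintro _ g hg rfl
    simpa using hne g hg
  · have : {h : H | h ∈ T.map e} = e '' {g | g ∈ T} := by ext; simp
    rw [this, ← MonoidHom.coe_coe e, ← MonoidHom.map_closure, hgen,
      Subgroup.map_top_of_surjective _ e.surjective]
  · rw [← map_list_prod, hprod, map_one]

end Group

section LinearAlgebra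

variable {K V ι : Type*} [Field K] [AddCommGroup V] [Module K V] [FiniteDimensional K V]
  [Fintype ι] [DecidableEq ι]

lemma exists_relation_dotProduct_ne_zero (t : ι → V) (hι : finrank K V + 2 ≤ Fintype.card ι) :
    ∃ k ∈ LinearMap.ker (Fintype.linearCombination K t), ∃ a : ι → K,
      ∑ i, a i = 0 ∧ k ⬝ᵥ a ≠ 0 := by
  set L := Fintype.linearCombination K t
  have hker : 2 ≤ finrank K (LinearMap.ker L) := by
    have := L.finrank_range_add_finrank_ker
    have := Submodule.finrank_le (LinearMap.range L)
    rw [Module.finrank_fintype_fun_eq_card] at *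
    omega
  obtain ⟨k, hk, hk_nonconst⟩ : ∃ k ∈ LinearMap.ker L, k ∉ K ∙ (1 : ι → K) := by
    by_contra! hle
    have := Submodule.finrank_mono (show LinearMap.ker L ≤ K ∙ (1 : ι → K) from hle)
    have := finrank_span_le_card (R := K) ({1} : Set (ι → K))
    rw [Set.toFinset_singleton, Finset.card_singleton] at this
    omega
  obtain ⟨i, j, hij⟩ : ∃ i j, k i ≠ k j := by
    by_contra! hconst
    obtain ⟨i₀⟩ : Nonempty ι := Fintype.card_pos_iff.mp (by omega)
    exact hk_nonconst
      (Submodule.mem_span_singleton.mpr ⟨k i₀, funext fun i => by simp [hconst i i₀]⟩)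
  refine ⟨k, hk, Pi.single i 1 - Pi.single j 1, by simp [Finset.sum_sub_distrib], ?_⟩
  simpa [dotProduct_sub, sub_eq_zero] using hij

lemma Submodule.eq_top_of_ker_le_of_map_eq_top {R M N : Type*} [Ring R] [AddCommGroup M]
    [AddCommGroup N] [Module R M] [Module R N] (f : M →ₗ[R] N) {S : Submodule R M}
    (hker : LinearMap.ker f ≤ S) (hmap : S.map f = ⊤) : S = ⊤ := by
  rw [← sup_eq_left.mpr hker, ← Submodule.comap_map_eq, hmap, Submodule.comap_top]

end LinearAlgebra

section ZModModule

variable {n : ℕ} {V : Type*} [AddCommGroup V] [Module (ZMod n) V]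

lemma AddSubgroup.toZModSubmodule_closure (s : Set V) :
    AddSubgroup.toZModSubmodule n (AddSubgroup.closure s) = Submodule.span (ZMod n) s :=
  le_antisymm (fun _ hx => (AddSubgroup.closure_le (Submodule.span (ZMod n) s).toAddSubgroup).mpr
      Submodule.subset_span hx)
    (Submodule.span_le.mpr AddSubgroup.subset_closure)

lemma closure_eq_top_iff_span_eq_top (S : Set (Multiplicative V)) :
    Subgroup.closure S = ⊤ ↔ Submodule.span (ZMod n) (ofAdd ⁻¹' S) = ⊤ := by
  rw [← AddSubgroup.toZModSubmodule_closure, ← Subgroup.toAddSubgroup'_closure,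
    map_eq_top_iff, map_eq_top_iff]

end ZModModule

section ElementaryAbelian

variable {p : ℕ} [Fact p.Prime] {V : Type*} [AddCommGroup V] [Module (ZMod p) V]

lemma pow_prime_eq_one (g : Multiplicative V) : g ^ p = 1 := by
  apply toAdd.injective
  simp [toAdd_pow, ← Nat.cast_smul_eq_nsmul (ZMod p)]

lemma IsSpherical.exists_lift [FiniteDimensional (ZMod p) V] {T : List (Multiplicative V)}
    (hT : IsSpherical T) (hr : finrank (ZMod p) V + 2 ≤ T.length) :
    ∃ T' : List (Multiplicative (V × ZMod p)),
      T'.map (AddMonoidHom.fst V (ZMod p)).toMultiplicative = T ∧ IsSpherical T' := by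
  obtain ⟨hne, hgen, hprod⟩ := hT
  set t : Fin T.length → V := fun i => toAdd (T.get i)
  obtain ⟨k, hk, a, ha, hka⟩ :=
    exists_relation_dotProduct_ne_zero (K := ZMod p) t (by simpa using hr)
  set π := (AddMonoidHom.fst V (ZMod p)).toMultiplicative
  set T' := List.ofFn fun i => ofAdd (t i, a i)
  have hmap : T'.map π = T := by
    simp [T', π, t, List.map_ofFn, Function.comp_def]
  refine ⟨T', hmap, ?_, ?_, ?_⟩
  · intro g hg hg1
    exact hne (π g) (hmap ▸ List.mem_map_of_mem hg) (by rw [hg1, map_one])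
  · rw [closure_eq_top_iff_span_eq_top (n := p)] at hgen ⊢
    set S := Submodule.span (ZMod p) (ofAdd ⁻¹' {g | g ∈ T'})
    have hgens : ∀ i, (t i, a i) ∈ S := fun i =>
      Submodule.subset_span (List.mem_ofFn.mpr ⟨i, rfl⟩ : ofAdd (t i, a i) ∈ T')
    have hvert : ((0 : V), k ⬝ᵥ a) ∈ S := by
      have : ((0 : V), k ⬝ᵥ a) = ∑ i, k i • (t i, a i) := by
        ext
        · simpa [Prod.fst_sum, Fintype.linearCombination_apply] using hk.symm
        · simp [Prod.snd_sum, dotProduct]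
      rw [this]
      exact S.sum_mem fun i _ => S.smul_mem _ (hgens i)
    have hker : LinearMap.ker (LinearMap.fst (ZMod p) V (ZMod p)) ≤ S := by
      rintro ⟨v, x⟩ (rfl : v = 0)
      simpa [div_mul_cancel₀ x hka] using S.smul_mem (x / k ⬝ᵥ a) hvert
    have hfst : S.map (LinearMap.fst (ZMod p) V (ZMod p)) = ⊤ := by
      rw [Submodule.map_span, ← hgen, ← hmap]
      congr 1
      ext v
      simp [π]
    exact Submodule.eq_top_of_ker_le_of_map_eq_top _ hker hfst
  · have hπ : π T'.prod = 1 := by rw [map_list_prod, hmap, hprod]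
    apply toAdd.injective
    ext
    · simpa [π] using congrArg toAdd hπ
    · simp [T', List.prod_ofFn, Prod.snd_sum, ha]

theorem IsRamificationStructure.exists_of_finrank_eq_succ [FiniteDimensional (ZMod p) V]
    {W : Type*} [AddCommGroup W] [Module (ZMod p) W]
    (hW : finrank (ZMod p) W = finrank (ZMod p) V + 1) {T₁ T₂ : List (Multiplicative V)}
    (h : IsRamificationStructure T₁ T₂) (h₁ : finrank (ZMod p) V + 2 ≤ T₁.length)
    (h₂ : finrank (ZMod p) V + 2 ≤ T₂.length) :
    ∃ T₁' T₂' : List (Multiplicative W), T₁'.length = T₁.length ∧ T₂'.length = T₂.length ∧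
      IsRamificationStructure T₁' T₂' := by
  obtain ⟨hT₁, hT₂, hdisj⟩ := h
  obtain ⟨S₁, rfl, hS₁⟩ := hT₁.exists_lift h₁
  obtain ⟨S₂, rfl, hS₂⟩ := hT₂.exists_lift h₂
  have : FiniteDimensional (ZMod p) W := Module.finite_of_finrank_pos (by omega)
  let e : Multiplicative (V × ZMod p) ≃* Multiplicative W :=
    (LinearEquiv.ofFinrankEq (R := ZMod p) (V × ZMod p) W
      (by rw [finrank_prod, finrank_self (ZMod p), hW])).toAddEquiv.toMultiplicative
  let π := (AddMonoidHom.fst V (ZMod p)).toMultiplicative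
  let φ : Multiplicative W →* Multiplicative V := π.comp e.symm.toMonoidHom
  have hφ (S : List (Multiplicative (V × ZMod p))) : (S.map e).map φ = S.map π := by
    simp [φ, List.map_map, Function.comp_def]
  refine ⟨S₁.map e, S₂.map e, by simp, by simp, hS₁.map_mulEquiv e, hS₂.map_mulEquiv e,
    sigmaSet_inter_eq_one_of_map φ ?_ (by rwa [hφ, hφ])⟩
  intro t ht
  have hφt : φ t ∈ S₁.map π := hφ S₁ ▸ List.mem_map_of_mem ht
  rw [orderOf_eq_prime (pow_prime_eq_one (p := p) _) (hT₁.1 _ hφt)]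
  exact orderOf_dvd_of_pow_eq_one (pow_prime_eq_one t)

end ElementaryAbelian

theorem stmt_12 (p : ℕ) (hp : p.Prime) (d r₁ r₂ : ℕ)
    (h₁ : r₁ ≥ d + 2) (h₂ : r₂ ≥ d + 2)
    (h : ∃ T₁ T₂ : List (Multiplicative (Fin d → ZMod p)),
      T₁.length = r₁ ∧ T₂.length = r₂ ∧ IsRamificationStructure T₁ T₂) :
    ∃ T₁ T₂ : List (Multiplicative (Fin (d + 1) → ZMod p)),
      T₁.length = r₁ ∧ T₂.length = r₂ ∧ IsRamificationStructure T₁ T₂ := by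
  have : Fact p.Prime := ⟨hp⟩
  obtain ⟨T₁, T₂, rfl, rfl, hT⟩ := h
  exact hT.exists_of_finrank_eq_succ (p := p) (by simp) (by simpa using h₁) (by simpa using h₂)
end

section
/- Let G be a finite p-group of exponent p^e that is semi-p^{e-1}-abelian, with d = d(G). If (U₁, U₂) is a ramification structure of size (r₁, r₂) for G/Ω_{e-1}(G) with r₁, r₂ ≥ d+1, then there is a lift of (U₁, U₂) to G which is a ramification structure of size (r₁, r₂) for G. -/
/-!
The lifts are built in two steps. All entries of `Uᵢ` but the last are lifted to generators of `G`:
in the Frattini quotient `G ⧸ Φ(G)`, an `𝔽_p`-vector space of dimension at most `d(G)`, a family of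
at least `d(G)` vectors spanning modulo a subspace `W` can be corrected by vectors of `W` into a
spanning family (exchange one linearly dependent vector at a time), and generating modulo `Φ(G)`
means generating. The last entry is the inverse of the product of the others.

For disjointness, a nontrivial element of `Σ(T₁) ∩ Σ(T₂)` has a power `y` of order `p` in the
intersection. Every entry of `Tᵢ` lies outside `Ω`, so it has order `p ^ e`, and therefore
`y = a ^ p ^ (e - 1) = b ^ p ^ (e - 1)` with `a ∈ Σ(T₁)`, `b ∈ Σ(T₂)`. Semi-`p ^ (e - 1)`-abelianity
puts `a * b⁻¹` in `Ω`, so `a` and `b` have the same image in `Σ(U₁) ∩ Σ(U₂) = {1}`; then `a ∈ Ω`,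
that is `y = 1`.
-/

open Module Set

namespace IsPGroup

variable {p : ℕ} [Fact p.Prime] {G : Type*} [Group G]

theorem exists_orderOf_pow_eq_prime (hG : IsPGroup p G) {x : G} (hx : x ≠ 1) :
    ∃ m : ℕ, orderOf (x ^ m) = p := by
  obtain ⟨k, hk⟩ := hG.exists_orderOf_eq_pow x
  exact ⟨_, orderOf_pow_orderOf_div (hk ▸ pow_ne_zero k (Fact.out : p.Prime).ne_zero)
    (hG.dvd_orderOf hx)⟩

variable [Finite G]

theorem normal_of_isCoatom (hG : IsPGroup p G) {M : Subgroup G} (hM : IsCoatom M) : M.Normal :=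
  have := hG.isNilpotent
  Subgroup.NormalizerCondition.normal_of_coatom M Group.normalizerCondition_of_isNilpotent hM

theorem card_quotient_of_isCoatom (hG : IsPGroup p G) {M : Subgroup G} [M.Normal]
    (hM : IsCoatom M) : Nat.card (G ⧸ M) = p := by
  have : IsSimpleOrder (Subgroup (G ⧸ M)) :=
    have := Set.isSimpleOrder_Ici_iff_isCoatom.mpr hM
    OrderIso.isSimpleOrder (β := Set.Ici M) (QuotientGroup.comapMk'OrderIso M)
  have : IsSimpleGroup (G ⧸ M) :=
    (isSimpleGroup_iff _).mpr ⟨Subgroup.nontrivial_iff.mp inferInstance,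
      fun H _ => IsSimpleOrder.eq_bot_or_eq_top H⟩
  have := (hG.to_quotient M).isNilpotent
  obtain ⟨k, hk⟩ := (IsPGroup.iff_card.mp (hG.to_quotient M))
  have hprime : (Nat.card (G ⧸ M)).Prime := IsSimpleGroup.prime_card
  rw [hk] at hprime ⊢
  obtain ⟨-, rfl⟩ := prime_pow_iff.mp (Nat.prime_iff.mp hprime)
  exact pow_one p

theorem pow_mem_frattini (hG : IsPGroup p G) (g : G) : g ^ p ∈ frattini G := by
  refine Subgroup.mem_iInf.mpr fun M => Subgroup.mem_iInf.mpr fun hM => ?_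
  have := hG.normal_of_isCoatom hM
  rw [← QuotientGroup.eq_one_iff, QuotientGroup.mk_pow, ← hG.card_quotient_of_isCoatom hM]
  exact pow_card_eq_one'

theorem commutator_mem_frattini (hG : IsPGroup p G) (a b : G) :
    a * b * a⁻¹ * b⁻¹ ∈ frattini G := by
  refine Subgroup.mem_iInf.mpr fun M => Subgroup.mem_iInf.mpr fun hM => ?_
  have := hG.normal_of_isCoatom hM
  have := isCyclic_of_prime_card (hG.card_quotient_of_isCoatom hM)
  rw [← QuotientGroup.eq_one_iff]
  simp only [QuotientGroup.mk_mul, QuotientGroup.mk_inv]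
  rw [isMulCommutative_iff.mp inferInstance (a : G ⧸ M)]
  group

end IsPGroup

abbrev QuotientGroup.commGroupOfCommutatorMem {G : Type*} [Group G] (N : Subgroup G) [N.Normal]
    (hN : ∀ a b : G, a * b * a⁻¹ * b⁻¹ ∈ N) : CommGroup (G ⧸ N) where
  mul_comm := by
    intro a b
    induction a using QuotientGroup.induction_on with | H a =>
    induction b using QuotientGroup.induction_on with | H b =>
    rw [← mul_inv_eq_one, mul_inv_rev, ← mul_assoc]
    exact (QuotientGroup.eq_one_iff _).mpr (hN a b)

theorem QuotientGroup.sup_eq_top_of_map_mk'_eq_top {G : Type*} [Group G] {N K : Subgroup G}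
    [N.Normal] (h : K.map (mk' N) = ⊤) : K ⊔ N = ⊤ := by
  rw [← ker_mk' N, ← Subgroup.comap_map_eq, h, Subgroup.comap_top]

namespace Submodule

variable {K V ι : Type*} [DivisionRing K] [AddCommGroup V] [Module K V] [FiniteDimensional K V]
  [Fintype ι]

theorem exists_span_range_lt_span_range_add_single [DecidableEq ι] {U : Submodule K V}
    {v : ι → V} (hι : finrank K V ≤ Fintype.card ι) (hv : span K (range v) ⊔ U = ⊤)
    (hne : span K (range v) ≠ ⊤) :
    ∃ j, ∃ u ∈ U, span K (range v) < span K (range (v + Pi.single j u)) := by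
  obtain ⟨u, huU, huv⟩ : ∃ u ∈ U, u ∉ span K (range v) := by
    by_contra! h
    exact hne (by rwa [sup_eq_left.mpr h] at hv)
  have hdep : ¬ LinearIndependent K v := fun hli =>
    hne (hli.span_eq_top_of_card_eq_finrank' (hι.antisymm' hli.fintype_card_le_finrank))
  obtain ⟨j, hj⟩ := not_forall_not.mp (mt linearIndependent_iff_notMem_span.mpr hdep)
  -- `v j` lies in the span of the other vectors, so trading it for `v j + u` loses nothing.
  set v' := v + Pi.single j u
  have hv'_of_ne : ∀ i ≠ j, v' i = v i := fun i hi => by simp [v', hi]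
  have hle : span K (range v) ≤ span K (range v') := by
    rw [span_le]
    rintro _ ⟨i, rfl⟩
    by_cases hij : i = j
    · subst hij
      refine span_mono ?_ hj
      rintro _ ⟨k, hk, rfl⟩
      exact ⟨k, hv'_of_ne k (by simpa using hk)⟩
    · exact subset_span ⟨i, hv'_of_ne i hij⟩
  refine ⟨j, u, huU, hle.lt_of_ne fun h => huv ?_⟩
  have hu : u = v' j - v j := by simp [v']
  rw [h, hu]
  exact sub_mem (subset_span ⟨j, rfl⟩) (hle (subset_span ⟨j, rfl⟩))

theorem exists_span_range_add_eq_top (U : Submodule K V) (v : ι → V)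
    (hι : finrank K V ≤ Fintype.card ι) (hv : span K (range v) ⊔ U = ⊤) :
    ∃ u : ι → V, (∀ i, u i ∈ U) ∧ span K (range (v + u)) = ⊤ := by
  classical
  induction hd : finrank K V - finrank K (span K (range v)) using Nat.strong_induction_on
    generalizing v with
  | _ d ih =>
  by_cases htop : span K (range v) = ⊤
  · exact ⟨0, fun _ => U.zero_mem, by simpa using htop⟩
  obtain ⟨j, w, hwU, hlt⟩ := exists_span_range_lt_span_range_add_single hι hv htop
  have hv' : span K (range (v + Pi.single j w)) ⊔ U = ⊤ :=
    top_unique (hv ▸ sup_le_sup_right hlt.le U)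
  have hdec := finrank_lt_finrank_of_lt hlt
  have := (span K (range (v + Pi.single j w))).finrank_le
  obtain ⟨u, huU, hu⟩ := ih _ (by omega) _ hv' rfl
  refine ⟨Pi.single j w + u, fun i => U.add_mem ?_ (huU i), by rwa [← add_assoc]⟩
  by_cases hij : i = j
  · subst hij; simpa using hwU
  · simp [hij]

end Submodule

theorem AddSubgroup.toZModSubmodule_closure_s16 (n : ℕ) {M : Type*} [AddCommGroup M]
    [Module (ZMod n) M] (s : Set M) :
    toZModSubmodule n (closure s) = Submodule.span (ZMod n) s :=
  le_antisymm
    (fun _ hx => (closure_le (Submodule.span (ZMod n) s).toAddSubgroup).mpr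
      Submodule.subset_span hx)
    (Submodule.span_le.mpr subset_closure)

section ZModSubmodule
variable {p : ℕ} {Q : Type*} [CommGroup Q] [Module (ZMod p) (Additive Q)]

def Subgroup.toZModSubmodule (p : ℕ) (Q : Type*) [CommGroup Q] [Module (ZMod p) (Additive Q)] :
    Subgroup Q ≃o Submodule (ZMod p) (Additive Q) :=
  Subgroup.toAddSubgroup.trans (AddSubgroup.toZModSubmodule p)

theorem Subgroup.toZModSubmodule_closure_s16 (s : Set Q) :
    toZModSubmodule p Q (closure s) = Submodule.span (ZMod p) (Additive.toMul ⁻¹' s) := by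
  rw [toZModSubmodule, OrderIso.trans_apply, toAddSubgroup_closure,
    AddSubgroup.toZModSubmodule_closure_s16]

theorem finrank_additive_le_rank [Fact p.Prime] [Finite Q] :
    finrank (ZMod p) (Additive Q) ≤ Group.rank Q := by
  obtain ⟨S, hcard, hS⟩ := Group.rank_spec Q
  have hrange : (range fun s : S => Additive.ofMul (s : Q)) = Additive.toMul ⁻¹' S := by
    ext a
    exact ⟨by rintro ⟨s, rfl⟩; exact s.2, fun h => ⟨⟨_, h⟩, rfl⟩⟩
  have hspan : Submodule.span (ZMod p) (range fun s : S => Additive.ofMul (s : Q)) = ⊤ := by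
    rw [hrange, ← Subgroup.toZModSubmodule_closure_s16, hS, OrderIso.map_top]
  have := finrank_range_le_card (R := ZMod p) fun s : S => Additive.ofMul (s : Q)
  rwa [Set.finrank, hspan, finrank_top, Fintype.card_coe, hcard] at this

end ZModSubmodule

theorem exists_mul_closure_eq_top_of_pow_eq_one {p : ℕ} [Fact p.Prime] {Q : Type*} [CommGroup Q]
    [Finite Q] (hQ : ∀ q : Q, q ^ p = 1) {ι : Type*} [Fintype ι] (N : Subgroup Q) (x : ι → Q)
    (hι : Group.rank Q ≤ Fintype.card ι) (hx : Subgroup.closure (range x) ⊔ N = ⊤) :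
    ∃ u : ι → Q, (∀ i, u i ∈ N) ∧ Subgroup.closure (range (x * u)) = ⊤ := by
  let _ : Module (ZMod p) (Additive Q) := AddCommGroup.zmodModule (n := p) fun a => hQ a.toMul
  let e := Subgroup.toZModSubmodule p Q
  have hv : Submodule.span (ZMod p) (range fun i => Additive.ofMul (x i)) ⊔ e N = ⊤ := by
    rw [← OrderIso.map_top e, ← hx, e.map_sup, Subgroup.toZModSubmodule_closure_s16]
    -- `Additive Q` is `Q` itself, so `toMul ⁻¹' range x` and `range (ofMul ∘ x)` agree by `rfl`.
    rfl
  obtain ⟨u, huN, hu⟩ := Submodule.exists_span_range_add_eq_top (e N) _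
    (finrank_additive_le_rank.trans hι) hv
  refine ⟨Additive.toMul ∘ u, huN, e.injective ?_⟩
  rw [Subgroup.toZModSubmodule_closure_s16, OrderIso.map_top e, ← hu]
  rfl

namespace IsPGroup

variable {p : ℕ} [Fact p.Prime] {G : Type*} [Group G] [Finite G]

theorem exists_mul_closure_eq_top (hG : IsPGroup p G) {ι : Type*} [Fintype ι] (N : Subgroup G)
    (x : ι → G) (hι : Group.rank G ≤ Fintype.card ι) (hx : Subgroup.closure (range x) ⊔ N = ⊤) :
    ∃ ω : ι → G, (∀ i, ω i ∈ N) ∧ Subgroup.closure (range (x * ω)) = ⊤ := by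
  let _ := QuotientGroup.commGroupOfCommutatorMem (frattini G) hG.commutator_mem_frattini
  let π := QuotientGroup.mk' (frattini G)
  have hπ : Function.Surjective π := QuotientGroup.mk'_surjective _
  have hQ : ∀ q : G ⧸ frattini G, q ^ p = 1 := by
    rintro ⟨g⟩
    exact (QuotientGroup.eq_one_iff _).mpr (hG.pow_mem_frattini g)
  obtain ⟨u, huN, hu⟩ := exists_mul_closure_eq_top_of_pow_eq_one hQ (N.map π) (π ∘ x)
    ((Group.rank_le_of_surjective π hπ).trans hι) (by
      rw [range_comp, ← MonoidHom.map_closure, ← Subgroup.map_sup, hx,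
        Subgroup.map_top_of_surjective π hπ])
  choose ω hωN hω using huN
  refine ⟨ω, hωN, frattini_nongenerating (QuotientGroup.sup_eq_top_of_map_mk'_eq_top ?_)⟩
  rw [MonoidHom.map_closure, ← range_comp, ← hu]
  congr 2
  ext i
  exact congrArg (π (x i) * ·) (hω i)

theorem exists_map_mk_eq_closure_eq_top (hG : IsPGroup p G) (N : Subgroup G) [N.Normal]
    {U : List (G ⧸ N)} (hU : Subgroup.closure {u | u ∈ U} = ⊤) (hlen : Group.rank G ≤ U.length) :
    ∃ T : List G, T.map (↑) = U ∧ Subgroup.closure {g | g ∈ T} = ⊤ := by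
  let x : Fin U.length → G := fun i => (U.get i).out
  have hx : Subgroup.closure (range x) ⊔ N = ⊤ := by
    refine QuotientGroup.sup_eq_top_of_map_mk'_eq_top ?_
    rw [MonoidHom.map_closure, ← range_comp, ← hU]
    congr 1
    ext u
    simp [x, List.mem_iff_get]
  obtain ⟨ω, hωN, hω⟩ := hG.exists_mul_closure_eq_top N x (by simpa using hlen) hx
  refine ⟨List.ofFn (x * ω), ?_, ?_⟩
  · rw [List.map_ofFn]
    conv_rhs => rw [← List.ofFn_get U]
    congr 1
    ext i
    simp [x, (QuotientGroup.eq_one_iff _).mpr (hωN i)]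
  · rw [← hω]
    congr 1
    ext g
    simp

theorem exists_map_mk_eq_isSpherical (hG : IsPGroup p G) (N : Subgroup G) [N.Normal]
    {U : List (G ⧸ N)} (hU : IsSpherical U) (hlen : Group.rank G < U.length) :
    ∃ T : List G, T.map (↑) = U ∧ IsSpherical T := by
  obtain ⟨hUne, hUcl, hUprod⟩ := hU
  obtain ⟨W, w, rfl⟩ := (List.eq_nil_or_concat' U).resolve_left (by rintro rfl; simp at hlen)
  have hw : w = W.prod⁻¹ := by
    rw [List.prod_append, List.prod_singleton] at hUprod
    exact eq_inv_of_mul_eq_one_right hUprod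
  have hWcl : Subgroup.closure {u | u ∈ W} = ⊤ := by
    refine top_unique (hUcl ▸ (Subgroup.closure_le _).mpr fun u hu => ?_)
    rcases List.mem_append.mp hu with hu | hu
    · exact Subgroup.subset_closure hu
    · rw [List.mem_singleton.mp hu, hw]
      exact inv_mem (Subgroup.list_prod_mem _ fun u hu => Subgroup.subset_closure hu)
  obtain ⟨T, hTW, hTcl⟩ := hG.exists_map_mk_eq_closure_eq_top N hWcl (by simp at hlen; omega)
  have hmap : (T ++ [T.prod⁻¹]).map ((↑) : G → G ⧸ N) = W ++ [w] := by
    rw [hw, ← hTW, List.map_append, List.map_singleton, QuotientGroup.mk_inv,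
      ← QuotientGroup.coe_mk', map_list_prod]
  refine ⟨T ++ [T.prod⁻¹], hmap, fun g hg h1 => ?_, ?_, by simp⟩
  · exact hUne g (hmap ▸ List.mem_map_of_mem hg) (by rw [h1]; rfl)
  · exact top_unique (hTcl ▸ Subgroup.closure_mono fun g hg => List.mem_append_left _ hg)

end IsPGroup

theorem exists_zpow_eq_pow_of_orderOf_eq {G : Type*} [Group G] {p n : ℕ} (hp : p ≠ 0) {t : G}
    (ht : orderOf t = p ^ (n + 1)) {k : ℤ} (hk : (t ^ k) ^ p = 1) :
    ∃ w : ℤ, t ^ k = (t ^ w) ^ p ^ n := by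
  have hdvd : (p : ℤ) ^ n * p ∣ k * p := by
    rw [← pow_succ, ← Nat.cast_pow, ← ht, orderOf_dvd_iff_zpow_eq_one, zpow_mul]
    exact_mod_cast hk
  obtain ⟨w, rfl⟩ := Int.dvd_of_mul_dvd_mul_right (by exact_mod_cast hp) hdvd
  exact ⟨w, by rw [← zpow_natCast, ← zpow_mul, mul_comm, Nat.cast_pow]⟩

section SigmaSet

variable {G H : Type*} [Group G] [Group H] {T : List G} {x : G}

theorem one_mem_sigmaSet_iff : 1 ∈ SigmaSet T ↔ T ≠ [] := by
  refine ⟨fun ⟨t, ht, _⟩ => List.ne_nil_of_mem ht, fun hT => ?_⟩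
  obtain ⟨t, ht⟩ := List.exists_mem_of_ne_nil T hT
  exact ⟨t, ht, 1, 0, by simp⟩

theorem pow_mem_sigmaSet (hx : x ∈ SigmaSet T) (n : ℕ) : x ^ n ∈ SigmaSet T := by
  obtain ⟨t, ht, c, k, rfl⟩ := hx
  exact ⟨t, ht, c, k * n, by rw [conj_pow, zpow_mul, zpow_natCast]⟩

theorem map_mem_sigmaSet (f : G →* H) (hx : x ∈ SigmaSet T) : f x ∈ SigmaSet (T.map f) := by
  obtain ⟨t, ht, c, k, rfl⟩ := hx
  exact ⟨f t, List.mem_map_of_mem ht, f c, k, by simp⟩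

theorem exists_pow_eq_of_mem_sigmaSet {p n : ℕ} (hp : p ≠ 0)
    (hT : ∀ t ∈ T, orderOf t = p ^ (n + 1)) (hx : x ∈ SigmaSet T) (hxp : x ^ p = 1) :
    ∃ a ∈ SigmaSet T, a ^ p ^ n = x := by
  obtain ⟨t, ht, c, k, rfl⟩ := hx
  have htk : (t ^ k) ^ p = 1 := by
    rwa [conj_pow, conj_eq_one_iff] at hxp
  obtain ⟨w, hw⟩ := exists_zpow_eq_pow_of_orderOf_eq hp (hT t ht) htk
  exact ⟨c * t ^ w * c⁻¹, ⟨t, ht, c, w, rfl⟩, by rw [conj_pow, hw]⟩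

end SigmaSet

theorem mem_closure_setOf_pow_eq_one_iff {G : Type*} [Group G] {n : ℕ}
    (hsemi : ∀ x y : G, x ^ n = y ^ n → (x * y⁻¹) ^ n = 1) {g : G} :
    g ∈ Subgroup.closure {g : G | g ^ n = 1} ↔ g ^ n = 1 := by
  let K := Subgroup.ofDiv {g : G | g ^ n = 1} ⟨1, one_pow n⟩
    fun x hx y hy => hsemi x y (hx.trans hy.symm)
  exact Iff.of_eq (congrArg (g ∈ ·) K.closure_eq)

section Disjointness

variable {G : Type*} [Group G] {p n : ℕ} [Fact p.Prime] {Ω : Subgroup G} [Ω.Normal]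

theorem orderOf_eq_of_mk_ne_one (hexp : ∀ g : G, g ^ p ^ (n + 1) = 1)
    (hΩ : ∀ g, g ∈ Ω ↔ g ^ p ^ n = 1) {t : G} (ht : (t : G ⧸ Ω) ≠ 1) : orderOf t = p ^ (n + 1) :=
  orderOf_eq_prime_pow (fun h => ht ((QuotientGroup.eq_one_iff t).mpr ((hΩ t).mpr h))) (hexp t)

theorem eq_one_of_mem_sigmaSet_inter_of_pow_eq_one (hexp : ∀ g : G, g ^ p ^ (n + 1) = 1)
    (hΩ : ∀ g, g ∈ Ω ↔ g ^ p ^ n = 1)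
    (hsemi : ∀ x y : G, x ^ p ^ n = y ^ p ^ n → (x * y⁻¹) ^ p ^ n = 1) {T₁ T₂ : List G}
    (hU : IsRamificationStructure (T₁.map ((↑) : G → G ⧸ Ω)) (T₂.map ((↑) : G → G ⧸ Ω)))
    {y : G} (hy : y ∈ SigmaSet T₁ ∩ SigmaSet T₂) (hyp : y ^ p = 1) : y = 1 := by
  obtain ⟨hU₁, hU₂, hU⟩ := hU
  have horder (T : List G) (hT : IsSpherical (T.map ((↑) : G → G ⧸ Ω))) (t : G) (ht : t ∈ T) :
      orderOf t = p ^ (n + 1) :=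
    orderOf_eq_of_mk_ne_one hexp hΩ (hT.1 _ (List.mem_map_of_mem ht))
  have hp := (Fact.out : p.Prime).ne_zero
  obtain ⟨a, ha, rfl⟩ := exists_pow_eq_of_mem_sigmaSet hp (horder T₁ hU₁) hy.1 hyp
  obtain ⟨b, hb, hab⟩ := exists_pow_eq_of_mem_sigmaSet hp (horder T₂ hU₂) hy.2 hyp
  have hab' : (a : G ⧸ Ω) = b := QuotientGroup.eq_iff_div_mem.mpr
    ((hΩ _).mpr (div_eq_mul_inv a b ▸ hsemi a b hab.symm))
  have ha' : (a : G ⧸ Ω) ∈ SigmaSet (T₁.map (↑)) ∩ SigmaSet (T₂.map (↑)) := by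
    refine ⟨?_, hab' ▸ ?_⟩ <;> simpa using map_mem_sigmaSet (QuotientGroup.mk' Ω) ‹_›
  rw [hU, mem_singleton_iff, QuotientGroup.eq_one_iff, hΩ] at ha'
  exact ha'

theorem sigmaSet_inter_sigmaSet_eq_one_of_map (hexp : ∀ g : G, g ^ p ^ (n + 1) = 1)
    (hΩ : ∀ g, g ∈ Ω ↔ g ^ p ^ n = 1)
    (hsemi : ∀ x y : G, x ^ p ^ n = y ^ p ^ n → (x * y⁻¹) ^ p ^ n = 1) {T₁ T₂ : List G}
    (hU : IsRamificationStructure (T₁.map ((↑) : G → G ⧸ Ω)) (T₂.map ((↑) : G → G ⧸ Ω))) :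
    SigmaSet T₁ ∩ SigmaSet T₂ = {1} := by
  have h1 : (1 : G ⧸ Ω) ∈ SigmaSet (T₁.map (↑)) ∩ SigmaSet (T₂.map (↑)) := hU.2.2 ▸ rfl
  have hne (T : List G) (h : (1 : G ⧸ Ω) ∈ SigmaSet (T.map (↑))) : 1 ∈ SigmaSet T :=
    one_mem_sigmaSet_iff.mpr (by simpa using one_mem_sigmaSet_iff.mp h)
  refine eq_singleton_iff_unique_mem.mpr ⟨⟨hne T₁ h1.1, hne T₂ h1.2⟩, fun x hx => ?_⟩
  by_contra hx1
  obtain ⟨m, hm⟩ := IsPGroup.exists_orderOf_pow_eq_prime (fun g => ⟨n + 1, hexp g⟩) hx1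
  have := eq_one_of_mem_sigmaSet_inter_of_pow_eq_one hexp hΩ hsemi hU
    ⟨pow_mem_sigmaSet hx.1 m, pow_mem_sigmaSet hx.2 m⟩ (hm ▸ pow_orderOf_eq_one _)
  exact (Fact.out : p.Prime).ne_one (hm ▸ orderOf_eq_one_iff.mpr this)

end Disjointness

theorem stmt_16 {G : Type*} [Group G] [Finite G] (p e : ℕ) (hp : p.Prime)
    (he : 1 ≤ e) (hpG : IsPGroup p G) (hexp : Monoid.exponent G = p ^ e)
    (hsemi : ∀ x y : G,
      x ^ p ^ (e - 1) = y ^ p ^ (e - 1) ↔ (x * y⁻¹) ^ p ^ (e - 1) = 1)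
    (Ω : Subgroup G) [Ω.Normal]
    (hΩ : Ω = Subgroup.closure {g : G | g ^ p ^ (e - 1) = 1})
    (r₁ r₂ : ℕ) (h₁ : r₁ ≥ Group.rank G + 1) (h₂ : r₂ ≥ Group.rank G + 1)
    (U₁ U₂ : List (G ⧸ Ω)) (hl₁ : U₁.length = r₁) (hl₂ : U₂.length = r₂)
    (hU : IsRamificationStructure U₁ U₂) :
    ∃ T₁ T₂ : List G,
      T₁.map (QuotientGroup.mk : G → G ⧸ Ω) = U₁ ∧
      T₂.map (QuotientGroup.mk : G → G ⧸ Ω) = U₂ ∧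
      IsRamificationStructure T₁ T₂ := by
  have := Fact.mk hp
  obtain ⟨n, rfl⟩ : ∃ n, e = n + 1 := ⟨e - 1, by omega⟩
  simp only [Nat.add_sub_cancel] at hsemi hΩ
  have hΩmem : ∀ g, g ∈ Ω ↔ g ^ p ^ n = 1 := fun g =>
    hΩ ▸ mem_closure_setOf_pow_eq_one_iff fun x y => (hsemi x y).mp
  obtain ⟨T₁, hT₁, hsph₁⟩ := hpG.exists_map_mk_eq_isSpherical Ω hU.1 (by omega)
  obtain ⟨T₂, hT₂, hsph₂⟩ := hpG.exists_map_mk_eq_isSpherical Ω hU.2.1 (by omega)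
  refine ⟨T₁, T₂, hT₁, hT₂, hsph₁, hsph₂, ?_⟩
  exact sigmaSet_inter_sigmaSet_eq_one_of_map (fun g => hexp ▸ Monoid.pow_exponent_eq_one g)
    hΩmem (fun x y => (hsemi x y).mp) (hT₁ ▸ hT₂ ▸ hU)
end
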